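/- arXiv:1408.4204 — 2 statements merged into one kernel-verified Lean document; each statement's English description precedes it below -/
import Mathlib

section
/- Let X be a Hilbert space and Φ : X → (-∞,∞] a proper convex function defined on a lattice (e.g. X = L²(Ω) with pointwise order) satisfying the submodularity identity Φ(ω₁ ∧ ω₂) + Φ(ω₁ ∨ ω₂) ≤ Φ(ω₁) + Φ(ω₂) for all ω₁, ω₂ ∈ D(Φ). Then ∂Φ is T-monotone: for any [ω₁, ω₁*] ∈ ∂Φ and [ω₂, ω₂*] ∈ ∂Φ one has (ω₁* - ω₂*, (ω₁ - ω₂)⁺)_X ≥ 0, where (·)⁺ denotes the positive part. -/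
/-!
STATEMENT 2: T-monotonicity of the subdifferential of a submodular proper convex
function on the lattice `X = L²(Ω)` (with pointwise a.e. order):
if `Φ(ω₁ ⊓ ω₂) + Φ(ω₁ ⊔ ω₂) ≤ Φ(ω₁) + Φ(ω₂)` for all `ω₁, ω₂`, then for any
`[ω₁, ω₁*] ∈ ∂Φ` and `[ω₂, ω₂*] ∈ ∂Φ` one has `(ω₁* - ω₂*, (ω₁ - ω₂)⁺) ≥ 0`.
-/

open MeasureTheory
open scoped RealInnerProductSpace

theorem subdifferential_T_monotone {Ω : Type*} [MeasurableSpace Ω] (μ : Measure Ω)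
    (Φ : Lp ℝ 2 μ → EReal)
    (hproper : ∃ z, Φ z ≠ ⊤)
    (hnobot : ∀ z, Φ z ≠ ⊥)
    (hconvex : ∀ x y : Lp ℝ 2 μ, ∀ t : ℝ, 0 ≤ t → t ≤ 1 →
      Φ (t • x + (1 - t) • y) ≤ (t : EReal) * Φ x + ((1 - t : ℝ) : EReal) * Φ y)
    (hsubmod : ∀ ω₁ ω₂ : Lp ℝ 2 μ, Φ (ω₁ ⊓ ω₂) + Φ (ω₁ ⊔ ω₂) ≤ Φ ω₁ + Φ ω₂)
    (ω₁ ω₂ ω₁s ω₂s : Lp ℝ 2 μ)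
    (h₁ : ∀ w : Lp ℝ 2 μ, ((⟪ω₁s, w - ω₁⟫ : ℝ) : EReal) + Φ ω₁ ≤ Φ w)
    (h₂ : ∀ w : Lp ℝ 2 μ, ((⟪ω₂s, w - ω₂⟫ : ℝ) : EReal) + Φ ω₂ ≤ Φ w) :
    0 ≤ ⟪ω₁s - ω₂s, (ω₁ - ω₂) ⊔ 0⟫ := by
  obtain ⟨z, hz⟩ := hproper
  -- Φ ω₁ and Φ ω₂ are finite
  have hfin : ∀ ωs ω : Lp ℝ 2 μ,
      (∀ w : Lp ℝ 2 μ, ((⟪ωs, w - ω⟫ : ℝ) : EReal) + Φ ω ≤ Φ w) → Φ ω ≠ ⊤ := by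
    intro ωs ω h htop
    have := h z
    rw [htop] at this
    have : (⊤ : EReal) ≤ Φ z := by
      simpa using this
    exact hz (top_le_iff.mp this)
  have h1t := hfin ω₁s ω₁ h₁
  have h2t := hfin ω₂s ω₂ h₂
  set r₁ : ℝ := (Φ ω₁).toReal with hr₁
  set r₂ : ℝ := (Φ ω₂).toReal with hr₂
  have e₁ : ((r₁ : ℝ) : EReal) = Φ ω₁ := EReal.coe_toReal h1t (hnobot ω₁)
  have e₂ : ((r₂ : ℝ) : EReal) = Φ ω₂ := EReal.coe_toReal h2t (hnobot ω₂)
  set p : Lp ℝ 2 μ := (ω₁ - ω₂) ⊔ 0 with hp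
  have einf : ω₁ ⊓ ω₂ - ω₁ = -p := by
    rw [hp, inf_sub]
    simp [sub_self, inf_comm]
    rw [neg_sup, neg_sub, neg_zero]
  have esup : ω₁ ⊔ ω₂ - ω₂ = p := by
    rw [hp, sup_sub]
    simp [sub_self]
  have H₁ := h₁ (ω₁ ⊓ ω₂)
  have H₂ := h₂ (ω₁ ⊔ ω₂)
  rw [einf] at H₁
  rw [esup] at H₂
  have hx : ⟪ω₁s, -p⟫ = -⟪ω₁s, p⟫ := inner_neg_right _ _
  rw [hx] at H₁
  set x : ℝ := ⟪ω₁s, p⟫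
  set y : ℝ := ⟪ω₂s, p⟫
  have hsum : ((-x : ℝ) : EReal) + Φ ω₁ + (((y : ℝ) : EReal) + Φ ω₂)
      ≤ Φ ω₁ + Φ ω₂ :=
    le_trans (add_le_add H₁ H₂) (hsubmod ω₁ ω₂)
  rw [← e₁, ← e₂] at hsum
  have hsum' : ((-x + r₁ + (y + r₂) : ℝ) : EReal) ≤ ((r₁ + r₂ : ℝ) : EReal) := by
    push_cast
    convert hsum using 1 <;> simp [EReal.coe_neg]
  have : -x + r₁ + (y + r₂) ≤ r₁ + r₂ := EReal.coe_le_coe_iff.mp hsum'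
  have hyx : y ≤ x := by linarith
  have : ⟪ω₁s - ω₂s, p⟫ = x - y := inner_sub_left _ _ _
  rw [this]
  linarith
end

section
/- Let X be a Hilbert space, Ψ and Ψₙ (n ∈ ℕ) proper l.s.c. convex functions on X, and suppose Ψₙ → Ψ in the sense of Γ-convergence. If [zₙ, zₙ*] ∈ ∂Ψₙ for each n, zₙ → z strongly in X, and zₙ* → z* weakly in X, then [z, z*] ∈ ∂Ψ and moreover Ψₙ(zₙ) → Ψ(z). -/
/-!
STATEMENT 4 (Fact 7): if `Ψₙ → Ψ` in the sense of Γ-convergence on a Hilbert space,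
`[zₙ, zₙ*] ∈ ∂Ψₙ`, `zₙ → z` strongly and `zₙ* → z*` weakly, then `[z, z*] ∈ ∂Ψ`
and `Ψₙ(zₙ) → Ψ(z)`.
-/

open Filter
open scoped RealInnerProductSpace Topology

/-- `zs ∈ ∂Ψ(z)`. -/
def IsSubgradAt {X : Type*} [NormedAddCommGroup X] [InnerProductSpace ℝ X]
    (Ψ : X → EReal) (z zs : X) : Prop :=
  ∀ w : X, ((⟪zs, w - z⟫ : ℝ) : EReal) + Ψ z ≤ Ψ w

/-- proper, l.s.c., convex. -/
def IsProperLscConvex {X : Type*} [NormedAddCommGroup X] [InnerProductSpace ℝ X]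
    (Ψ : X → EReal) : Prop :=
  (∃ z, Ψ z ≠ ⊤) ∧ (∀ z, Ψ z ≠ ⊥) ∧ LowerSemicontinuous Ψ ∧
    ∀ x y : X, ∀ t : ℝ, 0 ≤ t → t ≤ 1 →
      Ψ (t • x + (1 - t) • y) ≤ (t : EReal) * Ψ x + ((1 - t : ℝ) : EReal) * Ψ y

theorem gamma_limit_of_subgradients {X : Type*} [NormedAddCommGroup X]
    [InnerProductSpace ℝ X] [CompleteSpace X]
    (Ψ : X → EReal) (Ψn : ℕ → X → EReal)
    (hΨ : IsProperLscConvex Ψ) (hΨn : ∀ n, IsProperLscConvex (Ψn n))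
    -- (γ1) liminf inequality along strongly convergent sequences
    (hγ1 : ∀ (zd : X) (zs : ℕ → X), Tendsto zs atTop (𝓝 zd) →
      Ψ zd ≤ liminf (fun n => Ψn n (zs n)) atTop)
    -- (γ2) recovery sequences
    (hγ2 : ∀ zdd : X, Ψ zdd ≠ ⊤ → ∃ zs : ℕ → X,
      Tendsto zs atTop (𝓝 zdd) ∧ Tendsto (fun n => Ψn n (zs n)) atTop (𝓝 (Ψ zdd)))
    (z zstar : X) (zn znstar : ℕ → X)
    (hsub : ∀ n, IsSubgradAt (Ψn n) (zn n) (znstar n))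
    (hz : Tendsto zn atTop (𝓝 z))
    (hzstar : ∀ y : X, Tendsto (fun n => ⟪znstar n, y⟫) atTop (𝓝 ⟪zstar, y⟫)) :
    IsSubgradAt Ψ z zstar ∧ Tendsto (fun n => Ψn n (zn n)) atTop (𝓝 (Ψ z)) := by
  obtain ⟨⟨w₀, hw₀⟩, hbot, hlsc, hconv⟩ := hΨ
  -- uniform bound on ‖znstar n‖ via Banach–Steinhaus
  obtain ⟨M, hM⟩ : ∃ M : ℝ, ∀ n, ‖znstar n‖ ≤ M := by
    obtain ⟨C, hC⟩ := banach_steinhaus (g := fun n => innerSL ℝ (znstar n)) (fun y => by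
      obtain ⟨B, hB⟩ := ((hzstar y).norm.bddAbove_range)
      exact ⟨B, fun n => hB ⟨n, rfl⟩⟩)
    exact ⟨C, fun n => by simpa [innerSL_apply_norm] using hC n⟩
  -- inner product convergence along moving second argument
  have hinner : ∀ (w : X) (ws : ℕ → X), Tendsto ws atTop (𝓝 w) →
      Tendsto (fun n => ⟪znstar n, ws n - zn n⟫) atTop (𝓝 ⟪zstar, w - z⟫) := by
    intro w ws hws
    have hd : Tendsto (fun n => (ws n - zn n) - (w - z)) atTop (𝓝 0) := by
      have := (hws.sub hz).sub_const (w - z)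
      simpa using this
    have h0 : Tendsto (fun n => ⟪znstar n, (ws n - zn n) - (w - z)⟫) atTop (𝓝 0) := by
      apply squeeze_zero_norm (a := fun n => M * ‖(ws n - zn n) - (w - z)‖) (fun n => ?_)
      · simpa using (tendsto_const_nhds.mul (hd.norm))
      calc ‖⟪znstar n, (ws n - zn n) - (w - z)⟫‖ ≤ ‖znstar n‖ * ‖(ws n - zn n) - (w - z)‖ :=
              norm_inner_le_norm _ _
          _ ≤ M * ‖(ws n - zn n) - (w - z)‖ :=
              mul_le_mul_of_nonneg_right (hM n) (norm_nonneg _)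
    have := h0.add (hzstar (w - z))
    simp only [zero_add] at this
    convert this using 2 with n
    rw [← inner_add_right]
    congr 1
    abel
  -- limsup bound for any w with Ψ w ≠ ⊤
  have hlimsup : ∀ w : X, Ψ w ≠ ⊤ →
      limsup (fun n => Ψn n (zn n)) atTop ≤ ((-⟪zstar, w - z⟫ : ℝ) : EReal) + Ψ w := by
    intro w hw
    obtain ⟨ws, hws, hwconv⟩ := hγ2 w hw
    set c : ℕ → ℝ := fun n => ⟪znstar n, ws n - zn n⟫ with hc
    have hcten : Tendsto c atTop (𝓝 ⟪zstar, w - z⟫) := hinner w ws hws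
    have hptwise : ∀ n, Ψn n (zn n) ≤ ((-(c n) : ℝ) : EReal) + Ψn n (ws n) := by
      intro n
      have h := hsub n (ws n)
      calc Ψn n (zn n) = ((-(c n) : ℝ) : EReal) + (((c n : ℝ) : EReal) + Ψn n (zn n)) := by
            rw [← add_assoc]
            norm_cast
            simp
        _ ≤ ((-(c n) : ℝ) : EReal) + Ψn n (ws n) := add_le_add_right h _
    have hg : Tendsto (fun n => ((-(c n) : ℝ) : EReal) + Ψn n (ws n)) atTop
        (𝓝 (((-⟪zstar, w - z⟫ : ℝ) : EReal) + Ψ w)) := by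
      have h1 : Tendsto (fun n => ((-(c n) : ℝ) : EReal)) atTop
          (𝓝 ((-⟪zstar, w - z⟫ : ℝ) : EReal)) :=
        (EReal.continuous_coe_iff.mpr continuous_id).continuousAt.tendsto.comp hcten.neg
      have hcont : ContinuousAt (fun p : EReal × EReal => p.1 + p.2)
          (((-⟪zstar, w - z⟫ : ℝ) : EReal), Ψ w) :=
        EReal.continuousAt_add (Or.inl (EReal.coe_ne_top _)) (Or.inl (EReal.coe_ne_bot _))
      exact hcont.tendsto.comp (h1.prodMk_nhds hwconv)
    calc limsup (fun n => Ψn n (zn n)) atTop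
        ≤ limsup (fun n => ((-(c n) : ℝ) : EReal) + Ψn n (ws n)) atTop :=
          limsup_le_limsup (Eventually.of_forall hptwise)
      _ = ((-⟪zstar, w - z⟫ : ℝ) : EReal) + Ψ w := hg.limsup_eq
  have hliminf : Ψ z ≤ liminf (fun n => Ψn n (zn n)) atTop := hγ1 z zn hz
  have hlele : liminf (fun n => Ψn n (zn n)) atTop ≤ limsup (fun n => Ψn n (zn n)) atTop :=
    liminf_le_limsup
  have hztop : Ψ z ≠ ⊤ := by
    intro h
    have h1 := (hliminf.trans hlele).trans (hlimsup w₀ hw₀)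
    rw [h] at h1
    have : ((-⟪zstar, w₀ - z⟫ : ℝ) : EReal) + Ψ w₀ < ⊤ := by
      apply EReal.add_lt_top (EReal.coe_ne_top _) hw₀
    exact absurd (top_le_iff.mp h1) this.ne
  have hsubgrad : IsSubgradAt Ψ z zstar := by
    intro w
    rcases eq_or_ne (Ψ w) ⊤ with hw | hw
    · rw [hw]; exact le_top
    · have h1 : Ψ z ≤ ((-⟪zstar, w - z⟫ : ℝ) : EReal) + Ψ w :=
        (hliminf.trans hlele).trans (hlimsup w hw)
      calc ((⟪zstar, w - z⟫ : ℝ) : EReal) + Ψ z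
          ≤ ((⟪zstar, w - z⟫ : ℝ) : EReal) + (((-⟪zstar, w - z⟫ : ℝ) : EReal) + Ψ w) :=
            add_le_add_right h1 _
        _ = Ψ w := by
            rw [← add_assoc]
            norm_cast
            simp
  refine ⟨hsubgrad, ?_⟩
  have hls : limsup (fun n => Ψn n (zn n)) atTop ≤ Ψ z := by
    have := hlimsup z hztop
    simpa using this
  exact tendsto_of_le_liminf_of_limsup_le hliminf hls
end
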